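/- arXiv:2305.11509 — 2 statements merged into one kernel-verified Lean document; each statement's English description precedes it below -/
import Mathlib

section
/- Let (X_i)_{i∈ℕ} be an i.i.d. sequence of samples from μ, and for each T let Y_T^max = max_{1≤i≤T} f(X_i). Let (ω_T)_T be any sequence of positive reals with ω_T → ∞ and ω_T = o(T). Then (T/ω_T)^{1/d_s}·(f* − Y_T^max) converges to 0 in probability, i.e. for every β > 0, the probability that (T/ω_T)^{1/d_s}·(f* − Y_T^max) > β tends to 0 as T → ∞. -/
/-!
If the gap `f* - max_{i<T} f (X i)` exceeds `s`, every sample lies in `{f < f* - s}`, so by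
independence the probability is at most `μ {f < f* - s} ^ T`. Taking `s = β (ω_T / T)^{1/d_s}`,
the scattering inequality (with `α = s / (f* - f_min)`, or `α = 1` if `f* ≤ f_min`) bounds
`μ {f < f* - s}` by `1 - c ω_T / T` for a constant `c > 0`, hence the probability by
`exp (-c ω_T) → 0`.
-/

open MeasureTheory ProbabilityTheory Real Filter

lemma setOf_lt_sub_iSup_subset {Ω 𝒳 : Type*} (g : 𝒳 → ℝ) (X : ℕ → Ω → 𝒳) (c s : ℝ) (T : ℕ) :
    {ω | s < c - ⨆ i : Fin T, g (X i ω)} ⊆ ⋂ i ∈ Finset.range T, X i ⁻¹' {x | g x < c - s} := by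
  intro ω hω
  simp only [Set.mem_iInter, Finset.mem_range, Set.mem_preimage, Set.mem_ofPred_eq] at hω ⊢
  intro i hi
  have : g (X i ω) ≤ ⨆ j : Fin T, g (X j ω) :=
    le_ciSup (f := fun j : Fin T => g (X j ω)) (Set.finite_range _).bddAbove ⟨i, hi⟩
  linarith

section Sampling

variable {Ω 𝒳 : Type*} [MeasurableSpace Ω] [MeasurableSpace 𝒳] {P : Measure Ω}
  {μ : Measure 𝒳} [NeZero μ] {X : ℕ → Ω → 𝒳}

lemma measure_iInter_preimage_eq_pow (hiid : iIndepFun X P) (hlaw : ∀ i, P.map (X i) = μ)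
    {A : Set 𝒳} (hA : MeasurableSet A) (T : ℕ) :
    P (⋂ i ∈ Finset.range T, X i ⁻¹' A) = μ A ^ T := by
  have hmarginal : ∀ i, P (X i ⁻¹' A) = μ A := fun i => by
    have hX : AEMeasurable (X i) P := .of_map_ne_zero (hlaw i ▸ NeZero.ne μ)
    rw [← hlaw i, Measure.map_apply_of_aemeasurable hX hA]
  rw [hiid.measure_inter_preimage_eq_mul _ fun _ _ => hA]
  simp [hmarginal]

lemma measure_lt_sub_iSup_le_pow (hiid : iIndepFun X P) (hlaw : ∀ i, P.map (X i) = μ)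
    {g : 𝒳 → ℝ} (hg : Measurable g) (c s : ℝ) (T : ℕ) :
    P {ω | s < c - ⨆ i : Fin T, g (X i ω)} ≤ μ {x | g x < c - s} ^ T :=
  (measure_mono (setOf_lt_sub_iSup_subset g X c s T)).trans_eq
    (measure_iInter_preimage_eq_pow hiid hlaw (measurableSet_lt hg measurable_const) T)

end Sampling

lemma ENNReal.ofReal_one_sub_pow_le_exp (p : ℝ) (T : ℕ) :
    ENNReal.ofReal (1 - p) ^ T ≤ ENNReal.ofReal (exp (-(T * p))) := by
  calc ENNReal.ofReal (1 - p) ^ T ≤ ENNReal.ofReal (exp (-p)) ^ T := by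
        gcongr; exact one_sub_le_exp_neg p
    _ = ENNReal.ofReal (exp (-(T * p))) := by
        rw [← ENNReal.ofReal_pow (exp_nonneg _), ← exp_nat_mul, mul_neg]

section Scattering

variable {𝒳 : Type*} [MeasurableSpace 𝒳] {μ : Measure 𝒳} {f : 𝒳 → ℝ} {fstar fmin ds κs : ℝ}
  (hscatter : ∀ α ∈ Set.Ioc (0 : ℝ) 1,
    μ {x | f x < fstar - α * (fstar - fmin)} ≤ ENNReal.ofReal (1 - κs * α ^ ds))
include hscatter

lemma measure_lt_sub_mul_rpow_le (hΔ : 0 < fstar - fmin) (hds : 0 < ds) {β u : ℝ}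
    (hβ : 0 < β) (hu : 0 < u) (hsmall : β * u ^ (1 / ds) ≤ fstar - fmin) :
    μ {x | f x < fstar - β * u ^ (1 / ds)} ≤
      ENNReal.ofReal (1 - κs * (β / (fstar - fmin)) ^ ds * u) := by
  set α := β / (fstar - fmin) * u ^ (1 / ds)
  have hαΔ : α * (fstar - fmin) = β * u ^ (1 / ds) := by
    rw [mul_right_comm, div_mul_cancel₀ _ hΔ.ne']
  have hα : α ∈ Set.Ioc (0 : ℝ) 1 :=
    ⟨by positivity, le_of_mul_le_mul_right (by linarith) hΔ⟩
  have hα_rpow : α ^ ds = (β / (fstar - fmin)) ^ ds * u := by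
    rw [mul_rpow (by positivity) (by positivity), ← rpow_mul hu.le, one_div_mul_cancel hds.ne',
      rpow_one]
  simpa [hαΔ, hα_rpow, mul_assoc] using hscatter α hα

lemma measure_lt_sub_le_of_nonpos (hΔ : fstar - fmin ≤ 0) {s : ℝ} (hs : 0 ≤ s) :
    μ {x | f x < fstar - s} ≤ ENNReal.ofReal (1 - κs) := by
  calc μ {x | f x < fstar - s} ≤ μ {x | f x < fstar - 1 * (fstar - fmin)} :=
        measure_mono fun x (hx : f x < fstar - s) => show f x < _ by linarith
    _ ≤ ENNReal.ofReal (1 - κs) := by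
        simpa using hscatter 1 ⟨one_pos, le_rfl⟩

lemma exists_pos_eventually_measure_lt_sub_mul_rpow_le (hκs : 0 < κs) (hds : 0 < ds) {β : ℝ}
    (hβ : 0 < β) {ι : Type*} {l : Filter ι} {u : ι → ℝ} (hu : Tendsto u l (nhds 0))
    (hu_pos : ∀ᶠ i in l, 0 < u i) :
    ∃ c > 0, ∀ᶠ i in l,
      μ {x | f x < fstar - β * u i ^ (1 / ds)} ≤ ENNReal.ofReal (1 - c * u i) := by
  rcases lt_or_ge 0 (fstar - fmin) with hΔ | hΔ
  · have hgap : Tendsto (fun i => β * u i ^ (1 / ds)) l (nhds 0) := by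
      simpa [zero_rpow (inv_pos.2 hds).ne'] using
        (hu.rpow_const (Or.inr (one_div_pos.2 hds).le)).const_mul β
    refine ⟨κs * (β / (fstar - fmin)) ^ ds, by positivity, ?_⟩
    filter_upwards [hu_pos, hgap.eventually_le_const hΔ] with i hui hi
    exact measure_lt_sub_mul_rpow_le hscatter hΔ hds hβ hui hi
  · refine ⟨κs, hκs, ?_⟩
    filter_upwards [hu_pos, hu.eventually_le_const one_pos] with i hui hi
    calc _ ≤ ENNReal.ofReal (1 - κs) :=
          measure_lt_sub_le_of_nonpos hscatter hΔ (by positivity)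
      _ ≤ _ := ENNReal.ofReal_le_ofReal (by nlinarith)

end Scattering

theorem random_search_convergence_in_probability_general
    {𝒳 : Type*} [MetricSpace 𝒳] [MeasurableSpace 𝒳] [BorelSpace 𝒳]
    (μ : Measure 𝒳) [IsProbabilityMeasure μ]
    (f : 𝒳 → ℝ) (L : ℝ) (hf : LipschitzWith L.toNNReal f)
    (fstar fmin : ℝ)
    (ds κs : ℝ) (hds : 0 < ds) (hκs : κs ∈ Set.Ioc (0 : ℝ) 1)
    (hscatter : ∀ α ∈ Set.Ioc (0 : ℝ) 1,
      μ {x | f x < fstar - α * (fstar - fmin)} ≤ ENNReal.ofReal (1 - κs * α ^ ds))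
    {Ω : Type*} [MeasurableSpace Ω] (P : Measure Ω) [IsProbabilityMeasure P]
    (X : ℕ → Ω → 𝒳)
    (hiid : iIndepFun X P)
    (hlaw : ∀ i, Measure.map (X i) P = μ)
    (w : ℕ → ℝ)
    (hw_top : Tendsto w atTop atTop)
    (hw_o : Tendsto (fun T : ℕ => w T / T) atTop (nhds 0))
    (β : ℝ) (hβ : 0 < β) :
    Tendsto
      (fun T : ℕ =>
        P {ω | ((T : ℝ) / w T) ^ ((1 : ℝ) / ds) * (fstar - ⨆ i : Fin T, f (X i ω)) > β})
      atTop (nhds 0) := by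
  have hw_pos : ∀ᶠ T in atTop, 0 < w T := hw_top.eventually_gt_atTop 0
  have hT_pos : ∀ᶠ T : ℕ in atTop, (0 : ℝ) < T := by
    filter_upwards [eventually_gt_atTop 0] with T hT using Nat.cast_pos.2 hT
  obtain ⟨c, hc, hμ⟩ := exists_pos_eventually_measure_lt_sub_mul_rpow_le hscatter hκs.1 hds hβ
    hw_o (by filter_upwards [hw_pos, hT_pos] with T hw hT using div_pos hw hT)
  have hexp : Tendsto (fun T => ENNReal.ofReal (exp (-(c * w T)))) atTop (nhds 0) := by
    simpa using (ENNReal.tendsto_ofReal (tendsto_exp_atBot.comp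
      (tendsto_neg_atTop_atBot.comp (hw_top.const_mul_atTop hc))))
  refine tendsto_of_tendsto_of_tendsto_of_le_of_le' tendsto_const_nhds hexp
    (.of_forall fun _ => zero_le) ?_
  filter_upwards [hμ, hw_pos, hT_pos] with T hμT hwT hT
  have hscale : ((T : ℝ) / w T) ^ ((1 : ℝ) / ds) = ((w T / T) ^ (1 / ds))⁻¹ := by
    rw [← inv_rpow (by positivity), inv_div]
  calc P {ω | ((T : ℝ) / w T) ^ ((1 : ℝ) / ds) * (fstar - ⨆ i : Fin T, f (X i ω)) > β}
      = P {ω | β * (w T / T) ^ (1 / ds) < fstar - ⨆ i : Fin T, f (X i ω)} := by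
        have hpos : 0 < (w T / T) ^ (1 / ds) := by positivity
        simp_rw [hscale, gt_iff_lt, inv_mul_eq_div, lt_div_iff₀ hpos]
    _ ≤ μ {x | f x < fstar - β * (w T / T) ^ (1 / ds)} ^ T :=
        measure_lt_sub_iSup_le_pow hiid hlaw hf.continuous.measurable _ _ T
    _ ≤ ENNReal.ofReal (1 - c * (w T / T)) ^ T := by gcongr
    _ ≤ ENNReal.ofReal (exp (-(T * (c * (w T / T))))) := ENNReal.ofReal_one_sub_pow_le_exp _ T
    _ = ENNReal.ofReal (exp (-(c * w T))) := by field_simp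

/-- **Random search converges in probability (Theorem `thm:rs-asymp`).**
For i.i.d. samples `(X i)` from `μ`, `Y T = max_{1 ≤ i ≤ T} f (X i)`, and any positive
sequence `ω_T → ∞` with `ω_T = o(T)`, the quantity `(T / ω_T)^{1/ds} (f* - Y T)`
converges to `0` in probability. -/
theorem random_search_convergence_in_probability
    {𝒳 : Type*} [MetricSpace 𝒳] [CompactSpace 𝒳] [MeasurableSpace 𝒳] [BorelSpace 𝒳]
    (μ : Measure 𝒳) [IsProbabilityMeasure μ]
    (f : 𝒳 → ℝ) (L : ℝ) (hL : 0 ≤ L) (hf : LipschitzWith L.toNNReal f)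
    (fstar fmin Θ : ℝ)
    (hfstar : fstar = ⨆ x, f x) (hfmin : fmin = ⨅ x, f x)
    (hΘ : Θ = Metric.diam (Set.univ : Set 𝒳))
    (ds κs : ℝ) (hds : 0 < ds) (hκs : κs ∈ Set.Ioc (0 : ℝ) 1)
    (hscatter : ∀ α ∈ Set.Ioc (0 : ℝ) 1,
      μ {x | f x < fstar - α * (fstar - fmin)} ≤ ENNReal.ofReal (1 - κs * α ^ ds))
    {Ω : Type*} [MeasurableSpace Ω] (P : Measure Ω) [IsProbabilityMeasure P]
    (X : ℕ → Ω → 𝒳) (hXmeas : ∀ i, Measurable (X i))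
    (hiid : iIndepFun X P)
    (hlaw : ∀ i, Measure.map (X i) P = μ)
    (w : ℕ → ℝ) (hwpos : ∀ T, 0 < w T)
    (hw_top : Tendsto w atTop atTop)
    (hw_o : Tendsto (fun T : ℕ => w T / T) atTop (nhds 0))
    (β : ℝ) (hβ : 0 < β) :
    Tendsto
      (fun T : ℕ =>
        P {ω | ((T : ℝ) / w T) ^ ((1 : ℝ) / ds) * (fstar - ⨆ i : Fin T, f (X i ω)) > β})
      atTop (nhds 0) :=
  random_search_convergence_in_probability_general μ f L hf fstar fmin ds κs hds hκs hscatter P X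
    hiid hlaw w hw_top hw_o β hβ
end

section
/- Let X_1, …, X_T be i.i.d. samples from μ and let Z_1, …, Z_T be i.i.d. real random variables, independent of the X_i, whose common law is supported on [0, b−a] with density bounded below by κ_p > 0 on [0, b−a]. Let ω > 0 and β > 0 satisfy 0 < β·(ω/T)^{1/(d_s+1)} ≤ min(1, b−a). Then the probability that (T/ω)^{1/(d_s+1)}·min_{1≤i≤T}{ (f* − f(X_i))/(L·Θ) + Z_i } > β is at most (1 − (κ_s·κ_p/(d_s+1))·β^{d_s+1}·ω/T)^T. -/
/-!
Put `t = β (W/T)^{1/(ds+1)}`, so that the prefactor `(T/W)^{1/(ds+1)}` times `t` is `β`. On the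
event, every pair `(X i, Z i)` lies in `S = {(x, z) | t < (f* - f x)/(LΘ) + z}`, hence by
independence the probability is at most `(μ ⊗ ν)(S)^T`, where `ν` has density `g`. Lipschitz
continuity gives `f* - fmin ≤ LΘ`, so the scattering inequality gives the slice of `Sᶜ` at height
`z ∈ (0, t)` `μ`-mass at least `κs (t - z)^ds`; integrating against the density bound `κp` on
`(0, t) ⊆ [0, b - a]` yields `(μ ⊗ ν)(Sᶜ) ≥ κs κp t^{ds+1}/(ds+1) = κs κp β^{ds+1} W/((ds+1) T)`.
-/

open MeasureTheory ProbabilityTheory Real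
open scoped ENNReal NNReal

lemma iSup_sub_iInf_le_mul_diam {X : Type*} [PseudoMetricSpace X] [BoundedSpace X] [Nonempty X]
    {f : X → ℝ} {K : ℝ≥0} (hf : LipschitzWith K f) :
    (⨆ x, f x) - ⨅ x, f x ≤ K * Metric.diam (Set.univ : Set X) := by
  have hosc : ∀ x y, f x - f y ≤ K * Metric.diam (Set.univ : Set X) := fun x y =>
    calc f x - f y ≤ dist (f x) (f y) := le_abs_self _
      _ ≤ K * dist x y := hf.dist_le_mul x y
      _ ≤ K * Metric.diam (Set.univ : Set X) := by
        gcongr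
        exact Metric.dist_le_diam_of_mem (Bornology.isBounded_univ.2 ‹_›) trivial trivial
  rw [sub_le_iff_le_add]
  refine ciSup_le fun x => ?_
  rw [← sub_le_iff_le_add']
  exact le_ciInf fun y => by linarith [hosc x y]

section Complement

variable {α : Type*} [MeasurableSpace α] {μ : Measure α} [IsProbabilityMeasure μ] {s : Set α}

lemma ofReal_le_prob_compl_of_le_ofReal_one_sub (hs : MeasurableSet s) {r : ℝ} (hr : r ≤ 1)
    (h : μ s ≤ ENNReal.ofReal (1 - r)) : ENNReal.ofReal r ≤ μ sᶜ := by
  rcases le_or_gt r 0 with hr0 | hr0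
  · simp [ENNReal.ofReal_of_nonpos hr0]
  rw [prob_compl_eq_one_sub hs,
    ENNReal.le_sub_iff_add_le_left (measure_ne_top μ s) prob_le_one]
  calc μ s + ENNReal.ofReal r ≤ ENNReal.ofReal (1 - r) + ENNReal.ofReal r := by gcongr
    _ = 1 := by rw [← ENNReal.ofReal_add (by linarith) hr0.le]; simp

lemma prob_le_ofReal_one_sub_of_ofReal_le_compl (hs : MeasurableSet s) {c : ℝ} (hc : 0 ≤ c)
    (h : ENNReal.ofReal c ≤ μ sᶜ) : μ s ≤ ENNReal.ofReal (1 - c) := by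
  rw [← compl_compl s, prob_compl_eq_one_sub hs.compl, ENNReal.ofReal_sub 1 hc,
    ENNReal.ofReal_one]
  exact tsub_le_tsub_left h 1

end Complement

lemma smul_restrict_le_withDensity {α : Type*} [MeasurableSpace α] (μ : Measure α) {s : Set α}
    (hs : MeasurableSet s) {g : α → ℝ≥0∞} {c : ℝ≥0∞} (h : ∀ x ∈ s, c ≤ g x) :
    c • μ.restrict s ≤ μ.withDensity g := by
  rw [← withDensity_const, ← withDensity_indicator hs]
  refine withDensity_mono (Filter.Eventually.of_forall fun x => ?_)
  by_cases hx : x ∈ s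
  · simpa [hx] using h x hx
  · simp [hx]

lemma ENNReal.ofReal_pow_le_ofReal_pow (r : ℝ) (n : ℕ) :
    ENNReal.ofReal r ^ n ≤ ENNReal.ofReal (r ^ n) := by
  rcases le_or_gt 0 r with hr | hr
  · rw [ENNReal.ofReal_pow hr]
  · cases n with
    | zero => simp
    | succ n => simp [ENNReal.ofReal_of_nonpos hr.le]

lemma integral_sub_rpow {d : ℝ} (hd : -1 < d) (t : ℝ) :
    ∫ z in (0 : ℝ)..t, (t - z) ^ d = t ^ (d + 1) / (d + 1) := by
  rw [intervalIntegral.integral_comp_sub_left (fun u => u ^ d) t, sub_self, sub_zero,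
    integral_rpow (Or.inl hd), zero_rpow (by linarith), sub_zero]

lemma lintegral_Ioo_ofReal_mul_sub_rpow {κ d t : ℝ} (hκ : 0 ≤ κ) (hd : 0 ≤ d) (ht : 0 ≤ t) :
    ∫⁻ z in Set.Ioo 0 t, ENNReal.ofReal (κ * (t - z) ^ d) =
      ENNReal.ofReal (κ * t ^ (d + 1) / (d + 1)) := by
  have hcont : Continuous fun z : ℝ => κ * (t - z) ^ d :=
    continuous_const.mul ((continuous_const.sub continuous_id).rpow_const fun _ => Or.inr hd)
  have hint : IntegrableOn (fun z : ℝ => κ * (t - z) ^ d) (Set.Ioo 0 t) :=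
    hcont.integrableOn_Icc.mono_set Set.Ioo_subset_Icc_self
  rw [← ofReal_integral_eq_lintegral_ofReal hint, integral_const_mul,
    ← integral_Ioc_eq_integral_Ioo, ← intervalIntegral.integral_of_le ht,
    integral_sub_rpow (by linarith), mul_div_assoc]
  exact ae_restrict_of_forall_mem measurableSet_Ioo fun z hz =>
    mul_nonneg hκ (rpow_nonneg (by linarith [hz.2]) d)

lemma ofReal_mul_rpow_le_measure_setOf_sub_div_le {X : Type*} [MeasurableSpace X]
    {μ : Measure X} [IsProbabilityMeasure μ] {f : X → ℝ} (hf : Measurable f) {fstar fmin D κ d : ℝ}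
    (hD : 0 ≤ D) (hgap : fstar - fmin ≤ D) (hκ : κ ≤ 1) (hd : 0 ≤ d)
    (hscatter : ∀ α ∈ Set.Ioc (0 : ℝ) 1,
      μ {x | f x < fstar - α * (fstar - fmin)} ≤ ENNReal.ofReal (1 - κ * α ^ d)) :
    ∀ α ∈ Set.Ioc (0 : ℝ) 1,
      ENNReal.ofReal (κ * α ^ d) ≤ μ {x | (fstar - f x) / D ≤ α} := by
  intro α hα
  have hαd : κ * α ^ d ≤ 1 :=
    mul_le_one₀ hκ (rpow_nonneg hα.1.le d) (rpow_le_one hα.1.le hα.2 hd)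
  refine (ofReal_le_prob_compl_of_le_ofReal_one_sub (measurableSet_lt hf measurable_const) hαd
    (hscatter α hα)).trans (measure_mono fun x hx => ?_)
  simp only [Set.mem_compl_iff, Set.mem_ofPred_eq, not_lt] at hx ⊢
  rcases hD.eq_or_lt with rfl | hD
  · simpa using hα.1.le
  · rw [div_le_iff₀ hD]
    nlinarith [hα.1]

lemma ofReal_mul_rpow_le_measure_prod_setOf_add_le {X : Type*} [MeasurableSpace X]
    {μ : Measure X} [SFinite μ] {ν : Measure ℝ} [SFinite ν] {h : X → ℝ} (hh : Measurable h)
    {κ d B t : ℝ} {c : ℝ≥0∞}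
    (hμ : ∀ α ∈ Set.Ioc (0 : ℝ) 1, ENNReal.ofReal (κ * α ^ d) ≤ μ {x | h x ≤ α})
    (hν : c • volume.restrict (Set.Icc 0 B) ≤ ν) (hκ : 0 ≤ κ) (hd : 0 ≤ d)
    (ht0 : 0 ≤ t) (ht1 : t ≤ 1) (htB : t ≤ B) :
    c * ENNReal.ofReal (κ * t ^ (d + 1) / (d + 1)) ≤ μ.prod ν {p | h p.1 + p.2 ≤ t} := by
  set S := {p : X × ℝ | h p.1 + p.2 ≤ t}
  have hS : MeasurableSet S :=
    measurableSet_le ((hh.comp measurable_fst).add measurable_snd) measurable_const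
  have hslice : ∀ z ∈ Set.Ioo 0 t, ENNReal.ofReal (κ * (t - z) ^ d) ≤ μ ((·, z) ⁻¹' S) :=
    fun z hz => (hμ (t - z) ⟨by linarith [hz.2], by linarith [hz.1]⟩).trans
      (measure_mono fun x hx => by
        simp only [S, Set.mem_ofPred_eq, Set.mem_preimage] at hx ⊢
        linarith)
  calc c * ENNReal.ofReal (κ * t ^ (d + 1) / (d + 1))
      = c * ∫⁻ z in Set.Ioo 0 t, ENNReal.ofReal (κ * (t - z) ^ d) := by
        rw [lintegral_Ioo_ofReal_mul_sub_rpow hκ hd ht0]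
    _ ≤ c * ∫⁻ z in Set.Icc 0 B, μ ((·, z) ⁻¹' S) := by
        gcongr c * ?_
        exact (setLIntegral_mono' measurableSet_Ioo hslice).trans
          (lintegral_mono_set (Set.Ioo_subset_Icc_self.trans (Set.Icc_subset_Icc le_rfl htB)))
    _ = ∫⁻ z, μ ((·, z) ⁻¹' S) ∂(c • volume.restrict (Set.Icc 0 B)) := by
        rw [lintegral_smul_measure, smul_eq_mul]
    _ ≤ μ.prod ν S := by
        rw [Measure.prod_apply_symm hS]
        exact lintegral_mono' hν le_rfl

lemma measure_iInter_preimage_le_ofReal_one_sub_pow {Ω E ι : Type*} [MeasurableSpace Ω]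
    [MeasurableSpace E] [Fintype ι] {P : Measure Ω} [IsProbabilityMeasure P] {Y : ι → Ω → E}
    (hYm : ∀ i, Measurable (Y i)) (hY : iIndepFun Y P) {S : Set E} (hS : MeasurableSet S)
    {c : ℝ} (hc : 0 ≤ c) (h : ∀ i, ENNReal.ofReal c ≤ P (Y i ⁻¹' Sᶜ)) :
    P (⋂ i, Y i ⁻¹' S) ≤ ENNReal.ofReal ((1 - c) ^ Fintype.card ι) :=
  calc P (⋂ i, Y i ⁻¹' S) = ∏ i, P (Y i ⁻¹' S) := by
        simpa using hY.measure_inter_preimage_eq_mul Finset.univ (sets := fun _ => S)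
          fun _ _ => hS
    _ ≤ ENNReal.ofReal (1 - c) ^ Fintype.card ι :=
        Finset.prod_le_pow_card _ _ _ fun i _ =>
          prob_le_ofReal_one_sub_of_ofReal_le_compl (hYm i hS) hc (h i)
    _ ≤ ENNReal.ofReal ((1 - c) ^ Fintype.card ι) := ENNReal.ofReal_pow_le_ofReal_pow _ _

lemma setOf_mul_lt_mul_iInf_subset_iInter {ι Ω : Type*} [Finite ι] (F : ι → Ω → ℝ) {C t : ℝ}
    (hC : 0 < C) : {ω | C * t < C * ⨅ i, F i ω} ⊆ ⋂ i, {ω | t < F i ω} := fun _ hω =>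
  Set.mem_iInter.2 fun i =>
    (lt_of_mul_lt_mul_left hω hC.le).trans_le (ciInf_le (Set.finite_range _).bddBelow i)

theorem noisy_random_search_finite_sample_bound_general
    {𝒳 : Type*} [MetricSpace 𝒳] [CompactSpace 𝒳] [MeasurableSpace 𝒳] [BorelSpace 𝒳]
    (μ : Measure 𝒳) [IsProbabilityMeasure μ]
    (f : 𝒳 → ℝ) (L : ℝ) (hL : 0 ≤ L) (hf : LipschitzWith L.toNNReal f)
    (fstar fmin Θ : ℝ)
    (hfstar : fstar = ⨆ x, f x) (hfmin : fmin = ⨅ x, f x)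
    (hΘ : Θ = Metric.diam (Set.univ : Set 𝒳))
    (ds κs : ℝ) (hds : 0 < ds) (hκs : κs ∈ Set.Ioc (0 : ℝ) 1)
    (hscatter : ∀ α ∈ Set.Ioc (0 : ℝ) 1,
      μ {x | f x < fstar - α * (fstar - fmin)} ≤ ENNReal.ofReal (1 - κs * α ^ ds))
    (a b : ℝ) (κp : ℝ) (hκp : 0 < κp)
    (g : ℝ → ENNReal)
    (hlb : ∀ x ∈ Set.Icc (0 : ℝ) (b - a), ENNReal.ofReal κp ≤ g x)
    {Ω : Type*} [MeasurableSpace Ω] (P : Measure Ω) [IsProbabilityMeasure P]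
    (T : ℕ) (hT : 0 < T)
    (X : Fin T → Ω → 𝒳) (Z : Fin T → Ω → ℝ)
    (hXmeas : ∀ i, Measurable (X i)) (hZmeas : ∀ i, Measurable (Z i))
    (hiid : iIndepFun (fun i ω => (X i ω, Z i ω)) P)
    (hlaw : ∀ i, Measure.map (fun ω => (X i ω, Z i ω)) P
      = μ.prod (volume.withDensity g))
    (W : ℝ) (hW : 0 < W) (β : ℝ) (hβ0 : 0 < β)
    (hβ : β * (W / T) ^ ((1 : ℝ) / (ds + 1)) ≤ min 1 (b - a)) :
    P {ω | ((T : ℝ) / W) ^ ((1 : ℝ) / (ds + 1)) *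
        (⨅ i, ((fstar - f (X i ω)) / (L * Θ) + Z i ω)) > β}
      ≤ ENNReal.ofReal ((1 - κs * κp / (ds + 1) * β ^ (ds + 1) * W / T) ^ T) := by
  have := nonempty_of_isProbabilityMeasure μ
  obtain ⟨hκs0, hκs1⟩ := hκs
  have hWT : 0 < W / T := div_pos hW (Nat.cast_pos.2 hT)
  set t := β * (W / T) ^ ((1 : ℝ) / (ds + 1)) with ht
  have hgap : fstar - fmin ≤ L * Θ := by
    simpa [hfstar, hfmin, hΘ, Real.coe_toNNReal L hL] using iSup_sub_iInf_le_mul_diam hf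
  have hfm : Measurable f := hf.continuous.measurable
  set S := {p : 𝒳 × ℝ | t < (fstar - f p.1) / (L * Θ) + p.2}
  have hS : MeasurableSet S := measurableSet_lt measurable_const (by fun_prop)
  set c := κs * κp / (ds + 1) * β ^ (ds + 1) * W / T with hc
  have hbad : ENNReal.ofReal c ≤ μ.prod (volume.withDensity g) Sᶜ := by
    have htpow : t ^ (ds + 1) = β ^ (ds + 1) * (W / T) := by
      rw [ht, mul_rpow hβ0.le (by positivity), one_div, rpow_inv_rpow hWT.le (by linarith)]
    rw [Set.compl_ofPred]
    simp only [not_lt]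
    convert ofReal_mul_rpow_le_measure_prod_setOf_add_le ((hfm.const_sub fstar).div_const _)
      (ofReal_mul_rpow_le_measure_setOf_sub_div_le hfm
        (mul_nonneg hL (hΘ ▸ Metric.diam_nonneg)) hgap hκs1 hds.le hscatter)
      (smul_restrict_le_withDensity volume measurableSet_Icc hlb) hκs0.le hds.le
      (by positivity) (hβ.trans (min_le_left _ _)) (hβ.trans (min_le_right _ _)) using 1
    rw [← ENNReal.ofReal_mul hκp.le, htpow, hc]
    ring_nf
  have hCt : ((T : ℝ) / W) ^ ((1 : ℝ) / (ds + 1)) * t = β := by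
    rw [ht, ← inv_div, inv_rpow hWT.le, mul_left_comm,
      inv_mul_cancel₀ (rpow_pos_of_pos hWT _).ne', mul_one]
  calc _ ≤ P (⋂ i, (fun ω => (X i ω, Z i ω)) ⁻¹' S) := by
        refine measure_mono ?_
        rw [← hCt]
        exact setOf_mul_lt_mul_iInf_subset_iInter _ (by positivity)
    _ ≤ _ := measure_iInter_preimage_le_ofReal_one_sub_pow (c := c)
        (fun i => (hXmeas i).prodMk (hZmeas i)) hiid hS (by positivity) fun i => by
          rwa [← Measure.map_apply ((hXmeas i).prodMk (hZmeas i)) hS.compl, hlaw]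
    _ = _ := by rw [Fintype.card_fin]

/-- **Finite-sample bound for noisy random search.**
Let `(X i, Z i)`, `1 ≤ i ≤ T`, be i.i.d. pairs with `X i ~ μ`, `Z i` independent of
`X i` with a density supported on `[0, b-a]` bounded below by `κp` there. If
`0 < β (ω/T)^{1/(ds+1)} ≤ min 1 (b-a)`, then
`ℙ ((T/ω)^{1/(ds+1)} min_i ((f* - f (X i))/(L Θ) + Z i) > β)
  ≤ (1 - (κs κp/(ds+1)) β^{ds+1} ω / T)^T`. -/
theorem noisy_random_search_finite_sample_bound
    {𝒳 : Type*} [MetricSpace 𝒳] [CompactSpace 𝒳] [MeasurableSpace 𝒳] [BorelSpace 𝒳]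
    (μ : Measure 𝒳) [IsProbabilityMeasure μ]
    (f : 𝒳 → ℝ) (L : ℝ) (hL : 0 ≤ L) (hf : LipschitzWith L.toNNReal f)
    (fstar fmin Θ : ℝ)
    (hfstar : fstar = ⨆ x, f x) (hfmin : fmin = ⨅ x, f x)
    (hΘ : Θ = Metric.diam (Set.univ : Set 𝒳))
    (ds κs : ℝ) (hds : 0 < ds) (hκs : κs ∈ Set.Ioc (0 : ℝ) 1)
    (hscatter : ∀ α ∈ Set.Ioc (0 : ℝ) 1,
      μ {x | f x < fstar - α * (fstar - fmin)} ≤ ENNReal.ofReal (1 - κs * α ^ ds))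
    (a b : ℝ) (hab : a < b) (κp : ℝ) (hκp : 0 < κp)
    (g : ℝ → ENNReal) (hg : Measurable g)
    (hsupp : ∀ x ∉ Set.Icc (0 : ℝ) (b - a), g x = 0)
    (hlb : ∀ x ∈ Set.Icc (0 : ℝ) (b - a), ENNReal.ofReal κp ≤ g x)
    {Ω : Type*} [MeasurableSpace Ω] (P : Measure Ω) [IsProbabilityMeasure P]
    (T : ℕ) (hT : 0 < T)
    (X : Fin T → Ω → 𝒳) (Z : Fin T → Ω → ℝ)
    (hXmeas : ∀ i, Measurable (X i)) (hZmeas : ∀ i, Measurable (Z i))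
    (hiid : iIndepFun (fun i ω => (X i ω, Z i ω)) P)
    (hlaw : ∀ i, Measure.map (fun ω => (X i ω, Z i ω)) P
      = μ.prod (volume.withDensity g))
    (W : ℝ) (hW : 0 < W) (β : ℝ) (hβ0 : 0 < β)
    (hβ : β * (W / T) ^ ((1 : ℝ) / (ds + 1)) ≤ min 1 (b - a)) :
    P {ω | ((T : ℝ) / W) ^ ((1 : ℝ) / (ds + 1)) *
        (⨅ i, ((fstar - f (X i ω)) / (L * Θ) + Z i ω)) > β}
      ≤ ENNReal.ofReal ((1 - κs * κp / (ds + 1) * β ^ (ds + 1) * W / T) ^ T) :=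
  noisy_random_search_finite_sample_bound_general μ f L hL hf fstar fmin Θ hfstar hfmin hΘ ds κs hds
    hκs hscatter a b κp hκp g hlb P T hT X Z hXmeas hZmeas hiid hlaw W hW β hβ0 hβ
end
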